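/- In the hyperbolic plane (or in a totally geodesic plane of H³), consider a quadrilateral τ with vertices A, B, C, D where [A,B] lies on a geodesic line ℓ, the segments [A,C] and [B,D] are perpendicular to ℓ with lengths at most η, and [C,D] is a geodesic segment. Then sin(Area(τ)) ≤ sinh(η) · sinh(d(A,B)). -/

import Mathlib

/-!
Since `sin x ≤ x` for `x ≥ 0` and `s ≤ sinh s`, it suffices to bound the area by `s · sinh η`.
In polar coordinates the region containing `τ` lies in the box `1 ≤ r ≤ eˢ`,
`π/2 - arctan (sinh η) ≤ θ ≤ π/2`, on which the hyperbolic area element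
`r dr dθ / (r sin θ)²` splits as `r⁻¹ dr · sin⁻² θ dθ`; its integral is
`s · cot (π/2 - arctan (sinh η)) = s · sinh η`.
-/

open Real

/-- The hyperbolic area of a subset `τ` of the upper half-plane, computed with
the hyperbolic area density `1 / (Im z)²`. -/
noncomputable def hypArea (τ : Set ℂ) : ℝ := ∫ z in τ, (z.im ^ 2)⁻¹

open MeasureTheory Set

lemma integral_inv_Icc_one_exp {s : ℝ} (hs : 0 ≤ s) : ∫ r in Icc 1 (exp s), r⁻¹ = s := by
  rw [integral_Icc_eq_integral_Ioc, ← intervalIntegral.integral_of_le (one_le_exp hs),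
    integral_inv_of_pos one_pos (exp_pos s), div_one, log_exp]

lemma hasDerivAt_neg_cos_div_sin {x : ℝ} (hx : sin x ≠ 0) :
    HasDerivAt (fun θ => -(cos θ / sin θ)) (sin x ^ 2)⁻¹ x := by
  refine ((hasDerivAt_cos x).div (hasDerivAt_sin x) hx).neg.congr_deriv ?_
  rw [inv_eq_one_div, ← sin_sq_add_cos_sq x]
  ring

lemma sin_pos_of_mem_uIcc_pi_div_two_sub_arctan {c θ : ℝ}
    (hθ : θ ∈ uIcc (π / 2 - arctan c) (π / 2)) : 0 < sin θ := by
  obtain ⟨hlo, hhi⟩ := arctan_mem_Ioo c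
  rw [mem_uIcc] at hθ
  apply sin_pos_of_pos_of_lt_pi <;>
    rcases hθ with ⟨h₁, h₂⟩ | ⟨h₁, h₂⟩ <;> linarith [pi_pos]

lemma integral_inv_sin_sq_pi_div_two_sub_arctan (c : ℝ) :
    ∫ θ in (π / 2 - arctan c)..(π / 2), (sin θ ^ 2)⁻¹ = c := by
  have hsin θ (hθ : θ ∈ uIcc (π / 2 - arctan c) (π / 2)) : sin θ ≠ 0 :=
    (sin_pos_of_mem_uIcc_pi_div_two_sub_arctan hθ).ne'
  rw [intervalIntegral.integral_eq_sub_of_hasDerivAt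
      (fun θ hθ => hasDerivAt_neg_cos_div_sin (hsin θ hθ))
      ((continuous_sin.continuousOn.pow 2).inv₀
        fun θ hθ => pow_ne_zero 2 (hsin θ hθ)).intervalIntegrable,
    cos_pi_div_two, cos_pi_div_two_sub, sin_pi_div_two_sub, ← tan_eq_sin_div_cos, tan_arctan]
  ring

lemma hypArea_nonneg (τ : Set ℂ) : 0 ≤ hypArea τ :=
  integral_nonneg fun _ => by positivity

lemma hypArea_mono {σ τ : Set ℂ} (hστ : σ ⊆ τ)
    (hτ : IntegrableOn (fun z : ℂ => (z.im ^ 2)⁻¹) τ) : hypArea σ ≤ hypArea τ :=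
  integral_mono_measure (Measure.restrict_mono hστ le_rfl)
    (ae_of_all _ fun _ => by positivity) hτ

def annularSector (c s : ℝ) : Set ℂ :=
  {z | 0 < z.im ∧ 1 ≤ ‖z‖ ∧ ‖z‖ ≤ exp s ∧ 0 ≤ z.re ∧ z.re ≤ c * z.im}

lemma measurableSet_annularSector (c s : ℝ) : MeasurableSet (annularSector c s) := by
  unfold annularSector
  refine measurableSet_lt measurable_const Complex.measurable_im |>.inter <|
    measurableSet_le measurable_const measurable_norm |>.inter <|
    measurableSet_le measurable_norm measurable_const |>.inter <|
    (measurableSet_le measurable_const Complex.measurable_re).inter <|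
    measurableSet_le Complex.measurable_re (Complex.measurable_im.const_mul c)

lemma inv_im_sq_le_of_mem_annularSector {c s : ℝ} {z : ℂ} (hz : z ∈ annularSector c s) :
    (z.im ^ 2)⁻¹ ≤ 1 + c ^ 2 := by
  obtain ⟨him, hnorm, -, hre, hre_le⟩ := hz
  -- `1 ≤ ‖z‖² = re² + im² ≤ (1 + c²) im²`
  have := Complex.sq_norm_sub_sq_re z
  rw [inv_le_iff_one_le_mul₀ (by positivity)]
  nlinarith

lemma integrableOn_inv_im_sq_annularSector (c s : ℝ) :
    IntegrableOn (fun z : ℂ => (z.im ^ 2)⁻¹) (annularSector c s) := by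
  refine Measure.integrableOn_of_bounded (M := 1 + c ^ 2) ?_
    (Complex.measurable_im.pow_const 2).inv.aestronglyMeasurable ?_
  · refine ((measure_mono fun z hz => ?_).trans_lt
      (measure_closedBall_lt_top (x := (0 : ℂ)) (r := exp s))).ne
    simpa using hz.2.2.1
  · refine (ae_restrict_iff' (measurableSet_annularSector c s)).2 (ae_of_all _ fun z hz => ?_)
    rw [norm_of_nonneg (by positivity)]
    exact inv_im_sq_le_of_mem_annularSector hz

def annularSectorPolar (c s : ℝ) : Set (ℝ × ℝ) :=
  Icc 1 (exp s) ×ˢ Icc (π / 2 - arctan c) (π / 2)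

noncomputable def hypDensityPolar (p : ℝ × ℝ) : ℝ := p.1⁻¹ * (sin p.2 ^ 2)⁻¹

lemma measurableSet_annularSectorPolar (c s : ℝ) : MeasurableSet (annularSectorPolar c s) :=
  measurableSet_Icc.prod measurableSet_Icc

lemma pos_of_mem_annularSectorPolar {c s : ℝ} {p : ℝ × ℝ}
    (hp : p ∈ annularSectorPolar c s) :
    0 < p.1 ∧ 0 < sin p.2 :=
  ⟨one_pos.trans_le hp.1.1, sin_pos_of_mem_uIcc_pi_div_two_sub_arctan (Icc_subset_uIcc hp.2)⟩

lemma indicator_hypDensityPolar_nonneg (c s : ℝ) :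
    0 ≤ (annularSectorPolar c s).indicator hypDensityPolar :=
  indicator_nonneg fun _ hp =>
    mul_nonneg (inv_nonneg.2 (pos_of_mem_annularSectorPolar hp).1.le) (by positivity)

lemma integrable_indicator_hypDensityPolar (c s : ℝ) :
    Integrable ((annularSectorPolar c s).indicator hypDensityPolar) := by
  refine (ContinuousOn.integrableOn_compact (isCompact_Icc.prod isCompact_Icc) ?_
    ).integrable_indicator (measurableSet_annularSectorPolar c s)
  exact (continuous_fst.continuousOn.inv₀
    fun p hp => (pos_of_mem_annularSectorPolar hp).1.ne').mul
    ((continuous_sin.comp continuous_snd).continuousOn.pow 2 |>.inv₀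
      fun p hp => pow_ne_zero 2 (pos_of_mem_annularSectorPolar hp).2.ne')

lemma setIntegral_hypDensityPolar_annularSectorPolar {c s : ℝ} (hc : 0 ≤ c) (hs : 0 ≤ s) :
    ∫ p in annularSectorPolar c s, hypDensityPolar p = s * c := by
  have hle : π / 2 - arctan c ≤ π / 2 := by linarith [arctan_nonneg.2 hc]
  unfold annularSectorPolar hypDensityPolar
  rw [Measure.volume_eq_prod,
    setIntegral_prod_mul (fun r : ℝ => r⁻¹) (fun θ => (sin θ ^ 2)⁻¹),
    integral_inv_Icc_one_exp hs, integral_Icc_eq_integral_Ioc,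
    ← intervalIntegral.integral_of_le hle, integral_inv_sin_sq_pi_div_two_sub_arctan]

lemma Complex.polarCoord_symm_re (p : ℝ × ℝ) :
    (Complex.polarCoord.symm p).re = p.1 * Real.cos p.2 := by
  simp [Complex.polarCoord_symm_apply, Complex.cos_ofReal_re]

lemma Complex.polarCoord_symm_im (p : ℝ × ℝ) :
    (Complex.polarCoord.symm p).im = p.1 * Real.sin p.2 := by
  simp [Complex.polarCoord_symm_apply, Complex.sin_ofReal_re]

lemma mem_annularSectorPolar_of_polarCoord_symm_mem {c s : ℝ} {p : ℝ × ℝ}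
    (hp : p ∈ polarCoord.target) (hmem : Complex.polarCoord.symm p ∈ annularSector c s) :
    p ∈ annularSectorPolar c s := by
  obtain ⟨r, θ⟩ := p
  obtain ⟨hr, hθ_gt, hθ_lt⟩ : 0 < r ∧ -π < θ ∧ θ < π := by
    simpa [polarCoord_target] using hp
  obtain ⟨him, hr_ge, hr_le, hre, hre_le⟩ := hmem
  simp only [Complex.polarCoord_symm_re, Complex.polarCoord_symm_im,
    Complex.norm_polarCoord_symm, abs_of_pos hr] at *
  have hsin : 0 < sin θ := pos_of_mul_pos_right him hr.le
  have hcos : 0 ≤ cos θ := nonneg_of_mul_nonneg_right hre hr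
  have hθ_pos : 0 < θ := by
    by_contra! h
    linarith [sin_nonpos_of_nonpos_of_neg_pi_le h hθ_gt.le]
  have hθ_le : θ ≤ π / 2 := by
    by_contra! h
    linarith [cos_neg_of_pi_div_two_lt_of_lt h (by linarith)]
  have htan : tan (π / 2 - θ) ≤ c := by
    rw [tan_eq_sin_div_cos, sin_pi_div_two_sub, cos_pi_div_two_sub, div_le_iff₀ hsin]
    nlinarith
  have harctan : π / 2 - θ ≤ arctan c := by
    have := arctan_strictMono.monotone htan
    rwa [arctan_tan (by linarith) (by linarith)] at this
  exact ⟨⟨hr_ge, hr_le⟩, by linarith, hθ_le⟩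

lemma smul_indicator_polarCoord_symm_le {c s : ℝ} {p : ℝ × ℝ}
    (hp : p ∈ polarCoord.target) :
    p.1 • (annularSector c s).indicator (fun z => (z.im ^ 2)⁻¹) (Complex.polarCoord.symm p)
      ≤ (annularSectorPolar c s).indicator hypDensityPolar p := by
  by_cases hmem : Complex.polarCoord.symm p ∈ annularSector c s
  · have hpB := mem_annularSectorPolar_of_polarCoord_symm_mem hp hmem
    rw [indicator_of_mem hmem, indicator_of_mem hpB, Complex.polarCoord_symm_im, smul_eq_mul,
      hypDensityPolar]
    have := (pos_of_mem_annularSectorPolar hpB).1.ne'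
    exact le_of_eq (by field_simp)
  · rw [indicator_of_notMem hmem, smul_zero]
    exact indicator_hypDensityPolar_nonneg c s p

lemma hypArea_annularSector_le {c s : ℝ} (hc : 0 ≤ c) (hs : 0 ≤ s) :
    hypArea (annularSector c s) ≤ s * c := by
  have htarget := polarCoord.open_target.measurableSet
  calc hypArea (annularSector c s)
      = ∫ p in polarCoord.target,
          p.1 • (annularSector c s).indicator (fun z => (z.im ^ 2)⁻¹)
            (Complex.polarCoord.symm p) := by
        rw [hypArea, ← integral_indicator (measurableSet_annularSector c s),
          Complex.integral_comp_polarCoord_symm]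
    _ ≤ ∫ p in polarCoord.target, (annularSectorPolar c s).indicator hypDensityPolar p := by
        refine integral_mono_of_nonneg ?_ (integrable_indicator_hypDensityPolar c s).integrableOn
          ((ae_restrict_iff' htarget).2 (ae_of_all _ fun p => smul_indicator_polarCoord_symm_le))
        refine (ae_restrict_iff' htarget).2 (ae_of_all _ fun p hp => ?_)
        exact smul_nonneg hp.1.le (indicator_nonneg (fun z _ => by positivity) _)
    _ ≤ ∫ p, (annularSectorPolar c s).indicator hypDensityPolar p :=
        setIntegral_le_integral (integrable_indicator_hypDensityPolar c s)
          (ae_of_all _ (indicator_hypDensityPolar_nonneg c s))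
    _ = s * c := by
        rw [integral_indicator (measurableSet_annularSectorPolar c s),
          setIntegral_hypDensityPolar_annularSectorPolar hc hs]

/-- Normalisation by an isometry of `H²`: `ℓ` is the imaginary axis, `A = i`,
`B = e^s·i` with `s = d(A,B)`, and the perpendiculars at `A`, `B` are the
circles `|z| = 1`, `|z| = e^s`.  The points at distance `≤ η` from `ℓ`
(on the side of `C`, `D`) are those with `0 ≤ Re z ≤ sinh η · Im z`, and the
quadrilateral `τ` is contained in the region cut out by these conditions. -/
theorem stmt_7 (η s : ℝ) (hη : 0 ≤ η) (hs : 0 ≤ s) (τ : Set ℂ)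
    (hτ : τ ⊆ {z : ℂ | 0 < z.im ∧ 1 ≤ ‖z‖ ∧ ‖z‖ ≤ exp s ∧
      0 ≤ z.re ∧ z.re ≤ sinh η * z.im}) :
    sin (hypArea τ) ≤ sinh η * sinh s := by
  have hsinh : 0 ≤ sinh η := sinh_nonneg_iff.2 hη
  calc sin (hypArea τ) ≤ hypArea τ := sin_le (hypArea_nonneg τ)
    _ ≤ hypArea (annularSector (sinh η) s) :=
        hypArea_mono hτ (integrableOn_inv_im_sq_annularSector _ s)
    _ ≤ s * sinh η := hypArea_annularSector_le hsinh hs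
    _ ≤ sinh η * sinh s := by nlinarith [self_le_sinh_iff.2 hs]
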